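/- arXiv:2403.08212 — 4 statements merged into one kernel-verified Lean document; each statement's English description precedes it below -/
import Mathlib

section
/- Let a and b be positive integers with a ≤ b. Define f(i,j) = (a−b)/2 + j − i for (i,j) ∈ {1,…,a}×{1,…,b} and g(j) = j − (b+1)/2 for j ∈ {1,…,b}. Then the following two finite multisets of rational numbers are equal: the multiset sum, over all pairs (i,j) with f(i,j) > 0, of the two-element multisets {f(i,j), 1−f(i,j)}, plus the multiset of the values 1−f(i,j) over all pairs (i,j) with g(j) = 1/2; and the multiset sum, over all pairs (i,j) with g(j) > 0, of the two-element multisets {f(i,j), 1−f(i,j)}, plus the multiset of the values 1−f(i,j) over all pairs (i,j) with f(i,j) = 1/2. -/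
private theorem count_bind_pair (s : Finset (ℕ×ℕ)) (P : ℕ×ℕ → Prop) [DecidablePred P]
    (f : ℕ×ℕ → ℚ) (q : ℚ) :
    Multiset.count q ((s.filter P).val.bind (fun p => ({f p, 1 - f p} : Multiset ℚ)))
    = (s.filter (fun p => P p ∧ q = f p)).card + (s.filter (fun p => P p ∧ q = 1 - f p)).card := by
  rw [Multiset.count_bind]
  have h : ∀ p : ℕ×ℕ, Multiset.count q ({f p, 1 - f p} : Multiset ℚ)
      = (if q = f p then 1 else 0) + (if q = 1 - f p then 1 else 0) := by
    intro p
    rw [show ({f p, 1 - f p} : Multiset ℚ) = f p ::ₘ {1 - f p} from rfl, Multiset.count_cons,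
      Multiset.count_singleton]
    split_ifs <;> omega
  simp only [h]
  rw [show ((s.filter P).val.map
        (fun p => (if q = f p then 1 else 0) + (if q = 1 - f p then 1 else 0))).sum
      = ∑ p ∈ s.filter P, ((if q = f p then 1 else 0) + (if q = 1 - f p then 1 else 0)) from rfl]
  rw [Finset.sum_add_distrib, Finset.sum_boole, Finset.sum_boole, Finset.filter_filter,
    Finset.filter_filter]
  push_cast; ring

private theorem count_map_pair (s : Finset (ℕ×ℕ)) (P : ℕ×ℕ → Prop) [DecidablePred P]
    (f : ℕ×ℕ → ℚ) (q : ℚ) :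
    Multiset.count q ((s.filter P).val.map (fun p => 1 - f p))
    = (s.filter (fun p => P p ∧ q = 1 - f p)).card := by
  rw [Multiset.count_map, ← Finset.filter_val, Finset.filter_filter]
  rfl

private theorem card_slice (a b : ℕ) (t l u : ℤ) :
    ((Finset.Icc 1 a ×ˢ Finset.Icc 1 b).filter
       (fun p : ℕ×ℕ => (p.2:ℤ) - (p.1:ℤ) = t ∧ l ≤ (p.2:ℤ) ∧ (p.2:ℤ) ≤ u)).card
    = (Finset.Icc (max (max 1 (1+t)) l) (min (min (b:ℤ) (a+t)) u)).card := by
  refine Finset.card_bij' (fun p _ => (p.2 : ℤ)) (fun j _ => ((j - t).toNat, j.toNat)) ?_ ?_ ?_ ?_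
  · intro p hp
    simp only [Finset.mem_filter, Finset.mem_product, Finset.mem_Icc] at hp ⊢
    omega
  · intro j hj
    simp only [Finset.mem_filter, Finset.mem_product, Finset.mem_Icc] at hj ⊢
    omega
  · intro p hp
    simp only [Finset.mem_filter, Finset.mem_product, Finset.mem_Icc] at hp
    have h : ((p.2:ℤ) - t).toNat = p.1 := by omega
    simp [h, Prod.ext_iff]
  · intro j hj
    simp only [Finset.mem_Icc] at hj
    show ((j.toNat : ℕ) : ℤ) = j
    omega

set_option maxHeartbeats 2000000 in
/-- Equality of the two finite multisets of rational numbers arising from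
the gradings `f(i,j) = (a-b)/2 + j - i` (full semisimple element) and
`g(j) = j - (b+1)/2` (second-block semisimple element) on an `a × b` block, `a ≤ b`. -/
theorem block_multiset_identity (a b : ℕ) (ha : 0 < a) (hb : 0 < b) (hab : a ≤ b)
    (f : ℕ × ℕ → ℚ) (hf : ∀ p, f p = ((a : ℚ) - (b : ℚ)) / 2 + (p.2 : ℚ) - (p.1 : ℚ))
    (g : ℕ → ℚ) (hg : ∀ j, g j = (j : ℚ) - ((b : ℚ) + 1) / 2) :
    (((Finset.Icc 1 a ×ˢ Finset.Icc 1 b).filter (fun p => 0 < f p)).val.bind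
        (fun p => ({f p, 1 - f p} : Multiset ℚ)))
      + ((Finset.Icc 1 a ×ˢ Finset.Icc 1 b).filter (fun p => g p.2 = 1/2)).val.map
          (fun p => 1 - f p)
    = (((Finset.Icc 1 a ×ˢ Finset.Icc 1 b).filter (fun p => 0 < g p.2)).val.bind
        (fun p => ({f p, 1 - f p} : Multiset ℚ)))
      + ((Finset.Icc 1 a ×ˢ Finset.Icc 1 b).filter (fun p => f p = 1/2)).val.map
          (fun p => 1 - f p) := by
  classical
  -- the doubled grading is an integer equation
  have hfk : ∀ (p : ℕ×ℕ) (t : ℤ),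
      2 * f p = ((a:ℚ) - (b:ℚ) + 2 * (t:ℚ)) ↔ ((p.2:ℤ) - (p.1:ℤ) = t) := by
    intro p t
    rw [hf p]
    constructor
    · intro h
      have h2 : (((p.2:ℤ) - (p.1:ℤ) : ℤ) : ℚ) = ((t:ℤ) : ℚ) := by push_cast at h ⊢; linarith
      exact_mod_cast h2
    · intro h
      have h2 : (((p.2:ℤ) - (p.1:ℤ) : ℤ) : ℚ) = ((t:ℤ) : ℚ) := congrArg (fun z : ℤ => (z : ℚ)) h
      push_cast at h2 ⊢; linarith
  rw [Multiset.ext]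
  intro q
  simp only [Multiset.count_add]
  rw [count_bind_pair, count_bind_pair, count_map_pair, count_map_pair]
  by_cases hk : ∃ k : ℤ, 2*q = ((a:ℚ) - (b:ℚ) + 2*(k:ℚ))
  · obtain ⟨k, hk⟩ := hk
    set c : ℤ := (a:ℤ) - (b:ℤ) with hc
    set k' : ℤ := 1 - c - k with hk'
    -- translations of the elementary conditions
    have hcc : ((c:ℤ) : ℚ) = (a:ℚ) - (b:ℚ) := by rw [hc]; push_cast; ring
    have hq1 : ∀ p : ℕ×ℕ, (q = f p) ↔ ((p.2:ℤ) - (p.1:ℤ) = k) := by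
      intro p
      rw [← hfk p k]
      constructor <;> intro h <;> linarith
    have hq2 : ∀ p : ℕ×ℕ, (q = 1 - f p) ↔ ((p.2:ℤ) - (p.1:ℤ) = k') := by
      intro p
      rw [← hfk p k']
      have : ((k':ℤ) : ℚ) = 1 - ((a:ℚ) - (b:ℚ)) - (k:ℚ) := by
        rw [hk', hc]; push_cast; ring
      rw [this]
      constructor <;> intro h <;> linarith
    have hpos : ∀ (p : ℕ×ℕ) (t : ℤ), ((p.2:ℤ) - (p.1:ℤ) = t) →
        (0 < f p ↔ 0 < c + 2*t) := by
      intro p t ht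
      have h2 := (hfk p t).2 ht
      constructor
      · intro h
        have h3 : (0:ℚ) < ((c + 2*t : ℤ) : ℚ) := by push_cast [hcc] at h2 ⊢ <;> push_cast <;> linarith
        exact_mod_cast h3
      · intro h
        have h3 : (0:ℚ) < ((c + 2*t : ℤ) : ℚ) := by exact_mod_cast h
        push_cast at h3
        rw [hcc] at h3
        push_cast at h2
        linarith
    have hgpos : ∀ j : ℕ, (0 < g j) ↔ (((b:ℤ)+3)/2 ≤ (j:ℤ)) := by
      intro j
      rw [hg]
      have h1 : (0 < (j:ℚ) - ((b:ℚ)+1)/2) ↔ ((b:ℤ) + 1 < 2*(j:ℤ)) := by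
        constructor
        · intro h
          have h2 : (((b:ℤ) + 1 : ℤ) : ℚ) < ((2*(j:ℤ) : ℤ) : ℚ) := by push_cast; linarith
          exact_mod_cast h2
        · intro h
          have h2 : (((b:ℤ) + 1 : ℤ) : ℚ) < ((2*(j:ℤ) : ℤ) : ℚ) := by exact_mod_cast h
          push_cast at h2
          linarith
      rw [h1]
      omega
    have hghalf : ∀ j : ℕ, (g j = 1/2) ↔ (2*(j:ℤ) = (b:ℤ)+2) := by
      intro j
      rw [hg]
      constructor
      · intro h
        have h2 : ((2*(j:ℤ) : ℤ) : ℚ) = (((b:ℤ)+2 : ℤ) : ℚ) := by push_cast; linarith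
        exact_mod_cast h2
      · intro h
        have h2 : ((2*(j:ℤ) : ℤ) : ℚ) = (((b:ℤ)+2 : ℤ) : ℚ) := congrArg (fun z : ℤ => (z : ℚ)) h
        push_cast at h2
        linarith
    have grid_mem : ∀ p : ℕ×ℕ, p ∈ (Finset.Icc 1 a ×ˢ Finset.Icc 1 b) →
        (1 ≤ (p.1:ℤ) ∧ (p.1:ℤ) ≤ a ∧ 1 ≤ (p.2:ℤ) ∧ (p.2:ℤ) ≤ b) := by
      intro p hp
      simp only [Finset.mem_product, Finset.mem_Icc] at hp
      omega
    -- six card computations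
    have hT1 : ((Finset.Icc 1 a ×ˢ Finset.Icc 1 b).filter (fun p => 0 < f p ∧ q = f p)).card
        = (Finset.Icc (max (max 1 (1+k)) 1)
            (min (min (b:ℤ) (a+k)) (if 0 < c + 2*k then (b:ℤ) else 0))).card := by
      rw [← card_slice a b k 1 (if 0 < c + 2*k then (b:ℤ) else 0)]
      congr 1
      apply Finset.filter_congr
      intro p hp
      have hm := grid_mem p hp
      by_cases hcs : 0 < c + 2*k
      · simp only [if_pos hcs, hq1 p]
        constructor
        · rintro ⟨-, h2⟩; exact ⟨h2, by omega, by omega⟩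
        · rintro ⟨h1, -, -⟩; exact ⟨(hpos p k h1).2 hcs, h1⟩
      · simp only [if_neg hcs]
        constructor
        · rintro ⟨h1, h2⟩; exact absurd ((hpos p k ((hq1 p).1 h2)).1 h1) hcs
        · rintro ⟨-, -, h3⟩; omega
    have hT2 : ((Finset.Icc 1 a ×ˢ Finset.Icc 1 b).filter (fun p => 0 < f p ∧ q = 1 - f p)).card
        = (Finset.Icc (max (max 1 (1+k')) 1)
            (min (min (b:ℤ) (a+k')) (if 0 < c + 2*k' then (b:ℤ) else 0))).card := by
      rw [← card_slice a b k' 1 (if 0 < c + 2*k' then (b:ℤ) else 0)]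
      congr 1
      apply Finset.filter_congr
      intro p hp
      have hm := grid_mem p hp
      by_cases hcs : 0 < c + 2*k'
      · simp only [if_pos hcs, hq2 p]
        constructor
        · rintro ⟨-, h2⟩; exact ⟨h2, by omega, by omega⟩
        · rintro ⟨h1, -, -⟩; exact ⟨(hpos p k' h1).2 hcs, h1⟩
      · simp only [if_neg hcs]
        constructor
        · rintro ⟨h1, h2⟩; exact absurd ((hpos p k' ((hq2 p).1 h2)).1 h1) hcs
        · rintro ⟨-, -, h3⟩; omega
    have hT3 : ((Finset.Icc 1 a ×ˢ Finset.Icc 1 b).filter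
          (fun p => g p.2 = 1/2 ∧ q = 1 - f p)).card
        = (Finset.Icc (max (max 1 (1+k')) (((b:ℤ)+3)/2))
            (min (min (b:ℤ) (a+k')) (((b:ℤ)+2)/2))).card := by
      rw [← card_slice a b k' (((b:ℤ)+3)/2) (((b:ℤ)+2)/2)]
      congr 1
      apply Finset.filter_congr
      intro p hp
      rw [hghalf p.2, hq2 p]
      constructor
      · rintro ⟨h1, h2⟩; exact ⟨h2, by omega, by omega⟩
      · rintro ⟨h1, h2, h3⟩; exact ⟨by omega, h1⟩
    have hT4 : ((Finset.Icc 1 a ×ˢ Finset.Icc 1 b).filter (fun p => 0 < g p.2 ∧ q = f p)).card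
        = (Finset.Icc (max (max 1 (1+k)) (((b:ℤ)+3)/2))
            (min (min (b:ℤ) (a+k)) (b:ℤ))).card := by
      rw [← card_slice a b k (((b:ℤ)+3)/2) (b:ℤ)]
      congr 1
      apply Finset.filter_congr
      intro p hp
      have hm := grid_mem p hp
      rw [hgpos p.2, hq1 p]
      constructor
      · rintro ⟨h1, h2⟩; exact ⟨h2, h1, by omega⟩
      · rintro ⟨h1, h2, -⟩; exact ⟨h2, h1⟩
    have hT5 : ((Finset.Icc 1 a ×ˢ Finset.Icc 1 b).filter
          (fun p => 0 < g p.2 ∧ q = 1 - f p)).card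
        = (Finset.Icc (max (max 1 (1+k')) (((b:ℤ)+3)/2))
            (min (min (b:ℤ) (a+k')) (b:ℤ))).card := by
      rw [← card_slice a b k' (((b:ℤ)+3)/2) (b:ℤ)]
      congr 1
      apply Finset.filter_congr
      intro p hp
      have hm := grid_mem p hp
      rw [hgpos p.2, hq2 p]
      constructor
      · rintro ⟨h1, h2⟩; exact ⟨h2, h1, by omega⟩
      · rintro ⟨h1, h2, -⟩; exact ⟨h2, h1⟩
    have hT6 : ((Finset.Icc 1 a ×ˢ Finset.Icc 1 b).filter
          (fun p => f p = 1/2 ∧ q = 1 - f p)).card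
        = (Finset.Icc (max (max 1 (1+k')) 1)
            (min (min (b:ℤ) (a+k')) (if c + 2*k = 1 then (b:ℤ) else 0))).card := by
      rw [← card_slice a b k' 1 (if c + 2*k = 1 then (b:ℤ) else 0)]
      congr 1
      apply Finset.filter_congr
      intro p hp
      have hm := grid_mem p hp
      by_cases hcs : c + 2*k = 1
      · simp only [if_pos hcs, hq2 p]
        constructor
        · rintro ⟨-, h2⟩; exact ⟨h2, by omega, by omega⟩
        · rintro ⟨h1, -, -⟩
          refine ⟨?_, h1⟩
          have h2 := (hfk p k').2 h1
          have h3 : ((c + 2*k' : ℤ) : ℚ) = ((1 : ℤ) : ℚ) :=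
            congrArg (fun z : ℤ => (z : ℚ)) (by omega : c + 2*k' = 1)
          push_cast at h3
          rw [hcc] at h3
          linarith
      · simp only [if_neg hcs]
        constructor
        · rintro ⟨h1, h2⟩
          exfalso
          apply hcs
          have h3 : 2*q = (1:ℚ) := by rw [h2, h1]; ring
          have h4 : ((c + 2*k : ℤ) : ℚ) = ((1:ℤ) : ℚ) := by
            push_cast
            rw [hcc]
            linarith [hk, h3]
          exact_mod_cast h4
        · rintro ⟨-, -, h3⟩; omega
    rw [hT1, hT2, hT3, hT4, hT5, hT6]
    simp only [Int.card_Icc]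
    have hab' : (a:ℤ) ≤ (b:ℤ) := by exact_mod_cast hab
    have ha' : 1 ≤ (a:ℤ) := by exact_mod_cast ha
    have hkk : k' = 1 - c - k := hk'
    have hcc' : c = (a:ℤ) - (b:ℤ) := hc
    clear hT1 hT2 hT3 hT4 hT5 hT6 hq1 hq2 hpos hgpos hghalf grid_mem hfk hf hg hk hcc
    clear_value c k'
    clear f g q hc hk'
    split_ifs <;> omega
  · -- q is not of the right form: everything is empty
    have hbad1 : ∀ p : ℕ×ℕ, ¬ (q = f p) := by
      intro p h
      exact hk ⟨(p.2:ℤ) - (p.1:ℤ), by rw [h]; exact (hfk p ((p.2:ℤ) - (p.1:ℤ))).2 rfl⟩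
    have hbad2 : ∀ p : ℕ×ℕ, ¬ (q = 1 - f p) := by
      intro p h
      refine hk ⟨1 - ((a:ℤ) - (b:ℤ)) - ((p.2:ℤ) - (p.1:ℤ)), ?_⟩
      have h0 := (hfk p ((p.2:ℤ) - (p.1:ℤ))).2 rfl
      rw [h]
      push_cast at h0 ⊢
      linarith
    have hz : ∀ (P : ℕ×ℕ → Prop) (inst : DecidablePred P), (∀ x, ¬ P x) →
        ((Finset.Icc 1 a ×ˢ Finset.Icc 1 b).filter P).card = 0 := by
      intro P inst h
      rw [Finset.filter_eq_empty_iff.2 (fun x _ => h x)]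
      rfl
    rw [hz _ _ (fun p h => hbad1 p h.2), hz _ _ (fun p h => hbad2 p h.2),
      hz _ _ (fun p h => hbad2 p h.2), hz _ _ (fun p h => hbad1 p h.2),
      hz _ _ (fun p h => hbad2 p h.2), hz _ _ (fun p h => hbad2 p h.2)]
end

section
/- Let a and b be positive integers with a ≤ b. Define f(i,j) = (a−b)/2 + j − i for (i,j) ∈ {1,…,a}×{1,…,b}, g(j) = j − (b+1)/2, and c[t] = 12t(t−1) + 2 for t ∈ ℚ. Then Σ_{(i,j): f(i,j)>0} c[f(i,j)] − (1/2)·Σ_{(i,j): f(i,j)=1/2} c[f(i,j)] = Σ_{(i,j): g(j)>0} c[f(i,j)] − (1/2)·Σ_{(i,j): g(j)=1/2} c[f(i,j)], where all sums range over (i,j) ∈ {1,…,a}×{1,…,b}. -/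
/-!
On half-integers, `ghostWeight t = [0 < t] - ½[t = ½]` is a discrete Heaviside function adapted to
odd functions: if `Φ` is odd, `ghostWeight t * (Φ t - Φ (t - 1))` is the jump at `t` of `Φ` cut
off to `t ≥ 0`, so weighted sums along a row telescope. `Q t = 4t³ - 2t` is odd and a discrete
primitive of `c`: `c t = Q t - Q (t - 1)`. Summing over `j` first, the left side becomes
`∑ᵢ Q ((b - 1) / 2 - hᵢ)` with `hᵢ = i - (a + 1) / 2`; `a ≤ b` makes every row end at a
nonnegative grading. On the right side sum over `i` first: `Φ x = ∑ᵢ Q (x - hᵢ)` is a primitive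
of `x ↦ ∑ᵢ c (x - hᵢ)`, and it is odd because the `hᵢ` are symmetric about `0`, so the same
telescoping gives `Φ ((b - 1) / 2)` again.
-/

open Finset

def ghostCharge (t : ℚ) : ℚ := 12 * t * (t - 1) + 2

def ghostWeight (t : ℚ) : ℚ := (if 0 < t then 1 else 0) - if t = 1 / 2 then 1 / 2 else 0

def ghostChargePrimitive (t : ℚ) : ℚ := 4 * t ^ 3 - 2 * t

def blockPotential (a : ℕ) (x : ℚ) : ℚ :=
  ∑ i ∈ Icc 1 a, ghostChargePrimitive (x + ((a : ℚ) + 1) / 2 - i)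

def blockGrading (a b : ℕ) (p : ℕ × ℕ) : ℚ := ((a : ℚ) - b) / 2 + p.2 - p.1

def secondGrading (b j : ℕ) : ℚ := j - ((b : ℚ) + 1) / 2

lemma sum_filter_pos_sub_half_sum_filter {ι : Type*} (s : Finset ι) (φ w : ι → ℚ) :
    (∑ p ∈ s.filter (fun p => 0 < φ p), w p) - 1 / 2 * ∑ p ∈ s.filter (fun p => φ p = 1 / 2), w p
      = ∑ p ∈ s, ghostWeight (φ p) * w p := by
  simp only [sum_filter, mul_sum, ghostWeight, sub_mul, sum_sub_distrib, ite_mul, one_mul,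
    zero_mul, mul_ite, mul_zero]

lemma ghostWeight_mul_sub_of_odd {Φ : ℚ → ℚ} (hΦ : Φ.Odd) {t : ℚ} (ht : ∃ n : ℤ, t = n / 2) :
    ghostWeight t * (Φ t - Φ (t - 1))
      = (Set.Ici 0).indicator Φ t - (Set.Ici 0).indicator Φ (t - 1) := by
  obtain ⟨n, rfl⟩ := ht
  obtain h | rfl | rfl | h : 2 ≤ n ∨ n = 1 ∨ n = 0 ∨ n < 0 := by omega
  · have h' : (2 : ℚ) ≤ n := by exact_mod_cast h
    rw [ghostWeight, if_pos (by linarith), if_neg (by intro; linarith),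
      Set.indicator_of_mem (by simp only [Set.mem_Ici]; linarith),
      Set.indicator_of_mem (by simp only [Set.mem_Ici]; linarith)]
    ring
  · have := hΦ (1 / 2)
    norm_num [ghostWeight] at this ⊢
    linarith
  · simp [ghostWeight, hΦ.map_zero]
  · have h' : (n : ℚ) ≤ -1 := by exact_mod_cast (by omega : n ≤ -1)
    rw [ghostWeight, if_neg (by linarith), if_neg (by intro; linarith),
      Set.indicator_of_notMem (by simp only [Set.mem_Ici]; linarith),
      Set.indicator_of_notMem (by simp only [Set.mem_Ici]; linarith)]
    ring

lemma sum_ghostWeight_mul_sub_of_odd {Φ : ℚ → ℚ} (hΦ : Φ.Odd) {x : ℚ}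
    (hx : ∃ n : ℤ, x = n / 2) (b : ℕ) :
    ∑ j ∈ Icc 1 b, ghostWeight (x + j) * (Φ (x + j) - Φ (x + j - 1))
      = (Set.Ici 0).indicator Φ (x + b) - (Set.Ici 0).indicator Φ x := by
  obtain ⟨n, rfl⟩ := hx
  induction b with
  | zero => simp
  | succ b ih =>
    rw [sum_Icc_succ_top (by omega), ih,
      ghostWeight_mul_sub_of_odd hΦ ⟨n + 2 * (b + 1), by push_cast; ring⟩, Nat.cast_succ,
      ← add_assoc, add_sub_cancel_right]
    abel

lemma ghostChargePrimitive_odd : ghostChargePrimitive.Odd := fun t => by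
  simp only [ghostChargePrimitive]; ring

lemma ghostCharge_eq_sub (t : ℚ) :
    ghostCharge t = ghostChargePrimitive t - ghostChargePrimitive (t - 1) := by
  simp only [ghostCharge, ghostChargePrimitive]; ring

lemma blockPotential_odd (a : ℕ) : (blockPotential a).Odd := by
  intro x
  simp only [blockPotential, ← sum_neg_distrib]
  refine sum_nbij' (fun i => a + 1 - i) (fun i => a + 1 - i) ?_ ?_ ?_ ?_ ?_ <;>
    intro i hi <;> simp only [mem_Icc] at *
  any_goals omega
  rw [Nat.cast_sub (by omega), ← ghostChargePrimitive_odd]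
  push_cast
  ring_nf

lemma blockPotential_sub (a : ℕ) (x : ℚ) :
    blockPotential a x - blockPotential a (x - 1)
      = ∑ i ∈ Icc 1 a, ghostCharge (x + ((a : ℚ) + 1) / 2 - i) := by
  simp only [blockPotential, ← sum_sub_distrib, ghostCharge_eq_sub]
  ring_nf

lemma sum_ghostWeight_blockGrading_mul_ghostCharge {a b : ℕ} (hab : a ≤ b) :
    ∑ p ∈ Icc 1 a ×ˢ Icc 1 b, ghostWeight (blockGrading a b p) * ghostCharge (blockGrading a b p)
      = blockPotential a (((b : ℚ) - 1) / 2) := by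
  rw [sum_product, blockPotential]
  refine sum_congr rfl fun i hi => ?_
  have hia : (1 : ℚ) ≤ i ∧ (i : ℚ) ≤ a := by
    rw [mem_Icc] at hi; exact ⟨by exact_mod_cast hi.1, by exact_mod_cast hi.2⟩
  have hab' : (a : ℚ) ≤ b := by exact_mod_cast hab
  set x : ℚ := ((a : ℚ) - b) / 2 - i
  calc _ = ∑ j ∈ Icc 1 b, ghostWeight (x + j) *
          (ghostChargePrimitive (x + j) - ghostChargePrimitive (x + j - 1)) := by
        refine sum_congr rfl fun j _ => ?_
        rw [← ghostCharge_eq_sub,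
          show blockGrading a b (i, j) = x + j by simp only [blockGrading, x]; ring]
    _ = (Set.Ici 0).indicator ghostChargePrimitive (x + b)
          - (Set.Ici 0).indicator ghostChargePrimitive x :=
        sum_ghostWeight_mul_sub_of_odd ghostChargePrimitive_odd
          ⟨a - b - 2 * i, by push_cast; ring⟩ b
    _ = ghostChargePrimitive (((b : ℚ) - 1) / 2 + ((a : ℚ) + 1) / 2 - i) := by
        rw [Set.indicator_of_mem (by simp only [Set.mem_Ici, x]; linarith),
          Set.indicator_of_notMem (by simp only [Set.mem_Ici, x]; linarith), sub_zero]
        congr 1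
        simp only [x]
        ring

lemma sum_ghostWeight_secondGrading_mul_ghostCharge (a : ℕ) {b : ℕ} (hb : 0 < b) :
    ∑ p ∈ Icc 1 a ×ˢ Icc 1 b, ghostWeight (secondGrading b p.2) * ghostCharge (blockGrading a b p)
      = blockPotential a (((b : ℚ) - 1) / 2) := by
  have hb' : (1 : ℚ) ≤ b := by exact_mod_cast hb
  set x : ℚ := -((b : ℚ) + 1) / 2
  rw [sum_product_right]
  calc _ = ∑ j ∈ Icc 1 b, ghostWeight (x + j) *
          (blockPotential a (x + j) - blockPotential a (x + j - 1)) := by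
        refine sum_congr rfl fun j _ => ?_
        dsimp only
        rw [← mul_sum, blockPotential_sub, secondGrading]
        simp only [blockGrading, x]
        ring_nf
    _ = (Set.Ici 0).indicator (blockPotential a) (x + b)
          - (Set.Ici 0).indicator (blockPotential a) x :=
        sum_ghostWeight_mul_sub_of_odd (blockPotential_odd a) ⟨-(b + 1), by push_cast; ring⟩ b
    _ = blockPotential a (((b : ℚ) - 1) / 2) := by
        rw [Set.indicator_of_mem (by simp only [Set.mem_Ici, x]; linarith),
          Set.indicator_of_notMem (by simp only [Set.mem_Ici, x]; linarith), sub_zero]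
        congr 1
        simp only [x]
        ring

theorem block_central_charge_identity_general (a b : ℕ) (hb : 0 < b) (hab : a ≤ b)
    (f : ℕ × ℕ → ℚ) (hf : ∀ p, f p = ((a : ℚ) - (b : ℚ)) / 2 + (p.2 : ℚ) - (p.1 : ℚ))
    (g : ℕ → ℚ) (hg : ∀ j, g j = (j : ℚ) - ((b : ℚ) + 1) / 2)
    (c : ℚ → ℚ) (hc : ∀ t, c t = 12 * t * (t - 1) + 2) :
    (∑ p ∈ (Finset.Icc 1 a ×ˢ Finset.Icc 1 b).filter (fun p => 0 < f p), c (f p))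
      - (1/2) * ∑ p ∈ (Finset.Icc 1 a ×ˢ Finset.Icc 1 b).filter (fun p => f p = 1/2), c (f p)
    = (∑ p ∈ (Finset.Icc 1 a ×ˢ Finset.Icc 1 b).filter (fun p => 0 < g p.2), c (f p))
      - (1/2) * ∑ p ∈ (Finset.Icc 1 a ×ˢ Finset.Icc 1 b).filter (fun p => g p.2 = 1/2), c (f p) := by
  obtain rfl : f = blockGrading a b := funext hf
  obtain rfl : g = secondGrading b := funext hg
  obtain rfl : c = ghostCharge := funext hc
  rw [sum_filter_pos_sub_half_sum_filter, sum_filter_pos_sub_half_sum_filter,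
    sum_ghostWeight_blockGrading_mul_ghostCharge hab,
    sum_ghostWeight_secondGrading_mul_ghostCharge a hb]

/-- Equality of ghost central charges for a single `a × b` block (`a ≤ b`),
where `f(i,j) = (a-b)/2 + j - i`, `g(j) = j - (b+1)/2` and `c[t] = 12t(t-1) + 2`. -/
theorem block_central_charge_identity (a b : ℕ) (ha : 0 < a) (hb : 0 < b) (hab : a ≤ b)
    (f : ℕ × ℕ → ℚ) (hf : ∀ p, f p = ((a : ℚ) - (b : ℚ)) / 2 + (p.2 : ℚ) - (p.1 : ℚ))
    (g : ℕ → ℚ) (hg : ∀ j, g j = (j : ℚ) - ((b : ℚ) + 1) / 2)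
    (c : ℚ → ℚ) (hc : ∀ t, c t = 12 * t * (t - 1) + 2) :
    (∑ p ∈ (Finset.Icc 1 a ×ˢ Finset.Icc 1 b).filter (fun p => 0 < f p), c (f p))
      - (1/2) * ∑ p ∈ (Finset.Icc 1 a ×ˢ Finset.Icc 1 b).filter (fun p => f p = 1/2), c (f p)
    = (∑ p ∈ (Finset.Icc 1 a ×ˢ Finset.Icc 1 b).filter (fun p => 0 < g p.2), c (f p))
      - (1/2) * ∑ p ∈ (Finset.Icc 1 a ×ˢ Finset.Icc 1 b).filter (fun p => g p.2 = 1/2), c (f p) :=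
  block_central_charge_identity_general a b hb hab f hf g hg c hc
end

section
/- Let a and b be positive integers. Let S_c denote the c×c lower shift matrix over ℚ, (S_c)_{p,q} = 1 if p = q+1 and 0 otherwise, and let D_c be the diagonal c×c matrix with (D_c)_{p,p} = (c+1)/2 − p. Then the ℚ-vector space V = {X ∈ Matrix (b×a) ℚ : S_b·X = X·S_a} has dimension min(a,b); moreover, for every t ∈ ℚ, the subspace {X ∈ V : D_b·X − X·D_a = t·X} is one-dimensional if t = −|a−b|/2 − s for some integer s with 0 ≤ s ≤ min(a,b)−1, and is zero otherwise. -/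
/-!
`S_b X = X S_a` says that column `q + 1` of `X` is the shift of column `q` and that the
shift kills the last column. Hence `X` is a Toeplitz matrix, determined by its first column,
and that column vanishes outside its last `min a b` entries. The matrices with ones on the
diagonal `p - q = b - min a b + s`, `s < min a b`, therefore form a basis of the centralizer.
The weight of entry `(p, q)` under `X ↦ D_b X - X D_a` is `(b - a)/2 - (p - q)`, so the
`s`-th basis matrix is an eigenvector with eigenvalue `-|a - b|/2 - s`. These eigenvalues are
pairwise distinct, so every eigenspace inside the centralizer is spanned by the basis vectors
with that eigenvalue.
-/

/-- The `c × c` lower shift matrix over `ℚ`: entry `(p,q)` is `1` if `p = q + 1`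
(in the `1,…,c` labelling) and `0` otherwise. -/
def shiftM (c : ℕ) : Matrix (Fin c) (Fin c) ℚ :=
  Matrix.of fun p q => if (p : ℕ) = (q : ℕ) + 1 then 1 else 0

/-- The diagonal `c × c` Weyl-vector matrix over `ℚ`: diagonal entry at row `p`
(in the `1,…,c` labelling) is `(c+1)/2 - p`. -/
def weylD (c : ℕ) : Matrix (Fin c) (Fin c) ℚ :=
  Matrix.diagonal fun p => ((c : ℚ) + 1) / 2 - ((p : ℕ) + 1)

/-- The linear map `X ↦ S_b · X - X · S_a` on `b × a` matrices over `ℚ`. -/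
def shiftComm (a b : ℕ) :
    Matrix (Fin b) (Fin a) ℚ →ₗ[ℚ] Matrix (Fin b) (Fin a) ℚ where
  toFun X := shiftM b * X - X * shiftM a
  map_add' X Y := by
    simp only [Matrix.mul_add, Matrix.add_mul]
    abel
  map_smul' c X := by
    simp only [Matrix.mul_smul, Matrix.smul_mul, smul_sub, RingHom.id_apply]

/-- The linear map `X ↦ D_b · X - X · D_a` on `b × a` matrices over `ℚ`. -/
def weylComm (a b : ℕ) :
    Matrix (Fin b) (Fin a) ℚ →ₗ[ℚ] Matrix (Fin b) (Fin a) ℚ where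
  toFun X := weylD b * X - X * weylD a
  map_add' X Y := by
    simp only [Matrix.mul_add, Matrix.add_mul]
    abel
  map_smul' c X := by
    simp only [Matrix.mul_smul, Matrix.smul_mul, smul_sub, RingHom.id_apply]

theorem span_range_inf_ker_sub_smul_id {K M ι : Type*} [CommRing K] [NoZeroDivisors K]
    [AddCommGroup M] [Module K M] [Fintype ι] {v : ι → M} (hv : LinearIndependent K v)
    {f : M →ₗ[K] M} {μ : ι → K} (hf : ∀ i, f (v i) = μ i • v i) (t : K) :
    Submodule.span K (Set.range v) ⊓ LinearMap.ker (f - t • LinearMap.id) =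
      Submodule.span K (Set.range fun i : {i // μ i = t} => v i) := by
  apply le_antisymm
  · rintro x ⟨hx, hker⟩
    obtain ⟨c, rfl⟩ := (Submodule.mem_span_range_iff_exists_fun K).mp hx
    have hc : ∀ i, c i * (μ i - t) = 0 := by
      refine Fintype.linearIndependent_iff.mp hv _ ?_
      rw [← LinearMap.mem_ker.mp hker]
      simp [hf, smul_sub, smul_smul, mul_sub, sub_smul, Finset.sum_sub_distrib, mul_comm]
    refine Submodule.sum_mem _ fun i _ => ?_
    by_cases hi : μ i = t
    · exact Submodule.smul_mem _ _ (Submodule.subset_span ⟨⟨i, hi⟩, rfl⟩)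
    · rw [(mul_eq_zero.mp (hc i)).resolve_right (sub_ne_zero.mpr hi), zero_smul]
      exact Submodule.zero_mem _
  · rw [Submodule.span_le]
    rintro _ ⟨⟨i, hi⟩, rfl⟩
    exact ⟨Submodule.subset_span ⟨i, rfl⟩, by simp [hf, hi]⟩

theorem finrank_span_range_inf_ker_sub_smul_id {K M ι : Type*} [Field K] [AddCommGroup M]
    [Module K M] [Fintype ι] {v : ι → M} (hv : LinearIndependent K v) {f : M →ₗ[K] M}
    {μ : ι → K} (hf : ∀ i, f (v i) = μ i • v i) (t : K) :
    Module.finrank K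
        ↥(Submodule.span K (Set.range v) ⊓ LinearMap.ker (f - t • LinearMap.id)) =
      Nat.card {i // μ i = t} := by
  classical
  rw [span_range_inf_ker_sub_smul_id hv hf t, Nat.card_eq_fintype_card]
  exact finrank_span_eq_card (hv.comp _ Subtype.val_injective)

variable {a b : ℕ}

theorem shiftM_mul_apply {n : Type*} (X : Matrix (Fin b) n ℚ) (p : Fin b) (j : n) :
    (shiftM b * X) p j = if h : 0 < (p : ℕ) then X ⟨p - 1, by omega⟩ j else 0 := by
  simp only [shiftM, Matrix.mul_apply, Matrix.of_apply, ite_mul, one_mul, zero_mul]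
  split_ifs with hp
  · rw [Finset.sum_eq_single ⟨p - 1, by omega⟩
      (fun r _ hr => if_neg fun h => hr (Fin.ext (by simp; omega))) (by simp),
      if_pos (by simp; omega)]
  · exact Finset.sum_eq_zero fun r _ => if_neg (by omega)

theorem mul_shiftM_apply {m : Type*} (X : Matrix m (Fin a) ℚ) (i : m) (q : Fin a) :
    (X * shiftM a) i q = if h : (q : ℕ) + 1 < a then X i ⟨q + 1, h⟩ else 0 := by
  simp only [shiftM, Matrix.mul_apply, Matrix.of_apply, mul_ite, mul_one, mul_zero]
  split_ifs with hq
  · rw [Finset.sum_eq_single ⟨q + 1, hq⟩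
      (fun r _ hr => if_neg fun h => hr (Fin.ext (by simp; omega))) (by simp), if_pos rfl]
  · exact Finset.sum_eq_zero fun r _ => if_neg (by omega)

theorem mem_ker_shiftComm_iff {X : Matrix (Fin b) (Fin a) ℚ} :
    X ∈ LinearMap.ker (shiftComm a b) ↔ shiftM b * X = X * shiftM a :=
  LinearMap.mem_ker.trans sub_eq_zero

section Kernel

variable {X : Matrix (Fin b) (Fin a) ℚ} (hX : X ∈ LinearMap.ker (shiftComm a b))
include hX

theorem apply_succ_of_mem_ker_shiftComm (p : Fin b) (q : ℕ) (hq : q + 1 < a) :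
    X p ⟨q + 1, hq⟩ =
      if h : 0 < (p : ℕ) then X ⟨p - 1, by omega⟩ ⟨q, by omega⟩ else 0 := by
  have h := congr_fun₂ (mem_ker_shiftComm_iff.mp hX) p ⟨q, by omega⟩
  rw [shiftM_mul_apply, mul_shiftM_apply, dif_pos hq] at h
  exact h.symm

theorem apply_eq_of_mem_ker_shiftComm (p : Fin b) (q : Fin a) :
    X p q = if h : (q : ℕ) ≤ p then X ⟨p - q, by omega⟩ ⟨0, by omega⟩ else 0 := by
  obtain ⟨q, hq⟩ := q
  induction q generalizing p with
  | zero => simp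
  | succ q ih =>
    rw [apply_succ_of_mem_ker_shiftComm hX p q hq]
    by_cases hp : 0 < (p : ℕ)
    · rw [dif_pos hp, ih ⟨p - 1, by omega⟩ (by omega)]
      by_cases hqp : q + 1 ≤ p
      · rw [dif_pos (by simp; omega), dif_pos hqp]
        congr 2
        simp; omega
      · rw [dif_neg (by simp; omega), dif_neg hqp]
    · rw [dif_neg hp, dif_neg (by simp; omega)]

theorem apply_zero_eq_zero_of_mem_ker_shiftComm (ha : 0 < a) (p : Fin b)
    (hp : (p : ℕ) + a < b) : X p ⟨0, ha⟩ = 0 := by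
  have hdiag := apply_eq_of_mem_ker_shiftComm hX ⟨p + a - 1, by omega⟩ ⟨a - 1, by omega⟩
  have hlast := congr_fun₂ (mem_ker_shiftComm_iff.mp hX) ⟨p + a, hp⟩ ⟨a - 1, by omega⟩
  rw [shiftM_mul_apply, mul_shiftM_apply, dif_pos (by simp; omega), dif_neg (by simp; omega)]
    at hlast
  rw [dif_pos (by simp; omega), hlast] at hdiag
  convert hdiag.symm using 2
  exact Fin.ext (by simp; omega)

end Kernel

def firstColumnTail (a b : ℕ) : Matrix (Fin b) (Fin a) ℚ →ₗ[ℚ] Fin (min a b) → ℚ where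
  toFun X s := X ⟨b - min a b + s, by have := s.isLt; omega⟩ ⟨0, by have := s.isLt; omega⟩
  map_add' _ _ := rfl
  map_smul' _ _ := rfl

@[simp]
theorem firstColumnTail_apply (X : Matrix (Fin b) (Fin a) ℚ) (s : Fin (min a b)) :
    firstColumnTail a b X s =
      X ⟨b - min a b + s, by have := s.isLt; omega⟩ ⟨0, by have := s.isLt; omega⟩ :=
  rfl

theorem eq_zero_of_mem_ker_shiftComm_of_firstColumnTail_eq_zero {X : Matrix (Fin b) (Fin a) ℚ}
    (hX : X ∈ LinearMap.ker (shiftComm a b)) (h0 : firstColumnTail a b X = 0) : X = 0 := by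
  have hcol : ∀ (p : ℕ) (hp : p < b) (ha : 0 < a), X ⟨p, hp⟩ ⟨0, ha⟩ = 0 := by
    intro p hp ha
    by_cases hlow : p + a < b
    · exact apply_zero_eq_zero_of_mem_ker_shiftComm hX ha ⟨p, hp⟩ hlow
    · have := congr_fun h0 ⟨p - (b - min a b), by omega⟩
      rw [firstColumnTail_apply, Pi.zero_apply] at this
      rw [← this]
      congr 2
      simp; omega
  ext p q
  rw [apply_eq_of_mem_ker_shiftComm hX, Matrix.zero_apply]
  split_ifs
  · exact hcol _ _ _
  · rfl

theorem injective_firstColumnTail_domRestrict :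
    Function.Injective ((firstColumnTail a b).domRestrict (LinearMap.ker (shiftComm a b))) := by
  rw [← LinearMap.ker_eq_bot, LinearMap.ker_eq_bot']
  rintro ⟨X, hX⟩ h0
  exact Subtype.ext (eq_zero_of_mem_ker_shiftComm_of_firstColumnTail_eq_zero hX h0)

def shiftIntertwiner (a b s : ℕ) : Matrix (Fin b) (Fin a) ℚ :=
  Matrix.of fun p q => if (p : ℕ) = q + (b - min a b) + s then 1 else 0

theorem shiftIntertwiner_mem_ker (s : ℕ) :
    shiftIntertwiner a b s ∈ LinearMap.ker (shiftComm a b) := by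
  rw [mem_ker_shiftComm_iff]
  ext p q
  rw [shiftM_mul_apply, mul_shiftM_apply]
  simp only [shiftIntertwiner, Matrix.of_apply]
  split_ifs <;> first | rfl | omega

theorem firstColumnTail_shiftIntertwiner (s : Fin (min a b)) :
    firstColumnTail a b (shiftIntertwiner a b s) = Pi.single s 1 := by
  ext i
  simp only [firstColumnTail_apply, shiftIntertwiner, Matrix.of_apply, Pi.single_apply,
    Fin.ext_iff]
  split_ifs <;> first | rfl | omega

theorem linearIndependent_shiftIntertwiner :
    LinearIndependent ℚ fun s : Fin (min a b) => shiftIntertwiner a b s :=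
  .of_comp (firstColumnTail a b) <| by
    simpa only [Function.comp_def, firstColumnTail_shiftIntertwiner]
      using Pi.linearIndependent_single_one (Fin (min a b)) ℚ

theorem ker_shiftComm_eq_span :
    LinearMap.ker (shiftComm a b) =
      Submodule.span ℚ (Set.range fun s : Fin (min a b) => shiftIntertwiner a b s) := by
  refine (Submodule.eq_of_le_of_finrank_le ?_ ?_).symm
  · exact Submodule.span_le.mpr (Set.range_subset_iff.mpr fun s => shiftIntertwiner_mem_ker s)
  · rw [finrank_span_eq_card linearIndependent_shiftIntertwiner, Fintype.card_fin]
    simpa using LinearMap.finrank_le_finrank_of_injective injective_firstColumnTail_domRestrict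

theorem weylComm_apply (X : Matrix (Fin b) (Fin a) ℚ) (p : Fin b) (q : Fin a) :
    weylComm a b X p q = (((b : ℚ) - a) / 2 - ((p : ℕ) - (q : ℕ))) * X p q := by
  change (weylD b * X - X * weylD a) p q = _
  simp only [weylD, Matrix.sub_apply, Matrix.diagonal_mul, Matrix.mul_diagonal]
  ring

theorem weylComm_shiftIntertwiner (s : ℕ) :
    weylComm a b (shiftIntertwiner a b s) =
      (-|(a : ℚ) - (b : ℚ)| / 2 - (s : ℚ)) • shiftIntertwiner a b s := by
  ext p q
  rw [weylComm_apply, Matrix.smul_apply, smul_eq_mul]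
  simp only [shiftIntertwiner, Matrix.of_apply]
  split_ifs with hpq
  · have hp : ((p : ℕ) : ℚ) = (q : ℕ) + b - min (a : ℚ) b + s := by
      rw [hpq, ← Nat.cast_min]
      push_cast [Nat.cast_sub (min_le_right a b)]
      ring
    rw [hp]
    linarith [max_sub_min_eq_abs' (a : ℚ) b, min_add_max (a : ℚ) b]
  · simp

/-- the space `V = {X : S_b X = X S_a}` has dimension `min a b`, and for
each `t : ℚ` its `ad`-eigenspace `{X ∈ V : D_b X - X D_a = t X}` is one-dimensional if
`t = -|a-b|/2 - s` for some `0 ≤ s ≤ min a b - 1`, and zero otherwise. -/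
theorem block_centralizer_dims (a b : ℕ) (ha : 0 < a) (hb : 0 < b) :
    Module.finrank ℚ (LinearMap.ker (shiftComm a b)) = min a b ∧
    ∀ t : ℚ,
      ((∃ s : ℕ, s ≤ min a b - 1 ∧ t = -|(a : ℚ) - (b : ℚ)| / 2 - (s : ℚ)) →
        Module.finrank ℚ
          ↥(LinearMap.ker (shiftComm a b) ⊓
            LinearMap.ker (weylComm a b - t • LinearMap.id)) = 1) ∧
      (¬ (∃ s : ℕ, s ≤ min a b - 1 ∧ t = -|(a : ℚ) - (b : ℚ)| / 2 - (s : ℚ)) →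
        Module.finrank ℚ
          ↥(LinearMap.ker (shiftComm a b) ⊓
            LinearMap.ker (weylComm a b - t • LinearMap.id)) = 0) := by
  have hm : 0 < min a b := lt_min ha hb
  refine ⟨?_, fun t => ?_⟩
  · rw [ker_shiftComm_eq_span, finrank_span_eq_card linearIndependent_shiftIntertwiner,
      Fintype.card_fin]
  · rw [ker_shiftComm_eq_span, finrank_span_range_inf_ker_sub_smul_id
      linearIndependent_shiftIntertwiner (fun s => weylComm_shiftIntertwiner s) t]
    constructor
    · rintro ⟨s, hs, rfl⟩
      refine Nat.card_eq_one_iff_exists.mpr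
        ⟨⟨⟨s, by omega⟩, rfl⟩, fun ⟨i, hi⟩ => ?_⟩
      have hi_cast : ((i : ℕ) : ℚ) = s := by linarith
      exact Subtype.ext (Fin.ext (by exact_mod_cast hi_cast))
    · intro hnot
      have : IsEmpty {i : Fin (min a b) // _ = t} :=
        ⟨fun ⟨i, hi⟩ => hnot ⟨i, by omega, hi.symm⟩⟩
      exact Nat.card_of_isEmpty
end

section
/- For real numbers N, m, k define n = N − m, ψ = k + N and λ_{N,m}(k) = −(ψ−1)ψ/((nψ−N−2)(nψ−2ψ−N+2)(nψ+2ψ−N)). Let p, n, m be real numbers with n ≠ 0, p ≠ 0, p ≠ n, p ≠ n+m+2, (n−2)p ≠ n(n+m−2) and (n+2)p ≠ n(n+m). Then λ_{n+m,m}(−(n+m)+p/n) = −(n−p)p/((2+m+n−p)(mn+n²−2p−np)(−2n+mn+n²+2p−np)), and moreover λ_{p−n−m,0}(−(p−n−m)+p/(p−n)) equals the same expression. -/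
/-- The `λ`-parameter `λ_{N,m}(k)` of the universal affine coset
`C^k(sl_N, f_{1^m,n})`, with `n = N - m` and `ψ = k + N` (equation (3.2) of the paper). -/
noncomputable def lamParam (N m k : ℝ) : ℝ :=
  -(((k + N) - 1) * (k + N)) /
    (((N - m) * (k + N) - N - 2) * ((N - m) * (k + N) - 2 * (k + N) - N + 2) *
      ((N - m) * (k + N) + 2 * (k + N) - N))

/-- evaluation of `λ_{n+m,m}` at `k = -(n+m) + p/n`, and the coincidence
`λ_{n+m,m}(-(n+m)+p/n) = λ_{p-n-m,0}(-(p-n-m)+p/(p-n))`, under the nonvanishing of all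
linear factors in the denominators. -/
theorem lamParam_coincidence (p n m : ℝ) (hn : n ≠ 0) (hp : p ≠ 0) (hpn : p ≠ n)
    (h1 : p ≠ n + m + 2) (h2 : (n - 2) * p ≠ n * (n + m - 2))
    (h3 : (n + 2) * p ≠ n * (n + m)) :
    lamParam (n + m) m (-(n + m) + p / n)
      = -((n - p) * p) / ((2 + m + n - p) * (m * n + n ^ 2 - 2 * p - n * p) *
          (-2 * n + m * n + n ^ 2 + 2 * p - n * p)) ∧
    lamParam (p - n - m) 0 (-(p - n - m) + p / (p - n))
      = -((n - p) * p) / ((2 + m + n - p) * (m * n + n ^ 2 - 2 * p - n * p) *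
          (-2 * n + m * n + n ^ 2 + 2 * p - n * p)) := by
  have hd1 : (2 + m + n - p) ≠ 0 := by intro h; apply h1; linarith
  have hd2 : (m * n + n ^ 2 - 2 * p - n * p) ≠ 0 := by
    intro h; apply h3; ring_nf; ring_nf at h; linarith
  have hd3 : (-2 * n + m * n + n ^ 2 + 2 * p - n * p) ≠ 0 := by
    intro h; apply h2; ring_nf; ring_nf at h; linarith
  have hpn' : p - n ≠ 0 := sub_ne_zero.mpr hpn
  have hRHS : (2 + m + n - p) * (m * n + n ^ 2 - 2 * p - n * p) *
      (-2 * n + m * n + n ^ 2 + 2 * p - n * p) ≠ 0 :=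
    mul_ne_zero (mul_ne_zero hd1 hd2) hd3
  constructor
  · have hD : (((n + m) - m) * ((-(n + m) + p / n) + (n + m)) - (n + m) - 2) *
        (((n + m) - m) * ((-(n + m) + p / n) + (n + m)) - 2 * ((-(n + m) + p / n) + (n + m)) - (n + m) + 2) *
        (((n + m) - m) * ((-(n + m) + p / n) + (n + m)) + 2 * ((-(n + m) + p / n) + (n + m)) - (n + m))
        = (-(2 + m + n - p)) * (-(-2 * n + m * n + n ^ 2 + 2 * p - n * p)) *
          (-(m * n + n ^ 2 - 2 * p - n * p)) / (n * n) := by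
      field_simp
      ring
    have hDne : (((n + m) - m) * ((-(n + m) + p / n) + (n + m)) - (n + m) - 2) *
        (((n + m) - m) * ((-(n + m) + p / n) + (n + m)) - 2 * ((-(n + m) + p / n) + (n + m)) - (n + m) + 2) *
        (((n + m) - m) * ((-(n + m) + p / n) + (n + m)) + 2 * ((-(n + m) + p / n) + (n + m)) - (n + m)) ≠ 0 := by
      rw [hD]
      exact div_ne_zero (mul_ne_zero (mul_ne_zero (neg_ne_zero.mpr hd1)
        (neg_ne_zero.mpr hd3)) (neg_ne_zero.mpr hd2)) (mul_ne_zero hn hn)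
    rw [lamParam, div_eq_div_iff hDne hRHS]
    field_simp
    ring
  · have hD : (((p - n - m) - 0) * ((-(p - n - m) + p / (p - n)) + (p - n - m)) - (p - n - m) - 2) *
        (((p - n - m) - 0) * ((-(p - n - m) + p / (p - n)) + (p - n - m)) - 2 * ((-(p - n - m) + p / (p - n)) + (p - n - m)) - (p - n - m) + 2) *
        (((p - n - m) - 0) * ((-(p - n - m) + p / (p - n)) + (p - n - m)) + 2 * ((-(p - n - m) + p / (p - n)) + (p - n - m)) - (p - n - m))
        = (-(-2 * n + m * n + n ^ 2 + 2 * p - n * p)) * (-((2 + m + n - p) * n)) *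
          (-(m * n + n ^ 2 - 2 * p - n * p)) / ((p - n) * (p - n) * (p - n)) := by
      field_simp
      ring
    have hDne : (((p - n - m) - 0) * ((-(p - n - m) + p / (p - n)) + (p - n - m)) - (p - n - m) - 2) *
        (((p - n - m) - 0) * ((-(p - n - m) + p / (p - n)) + (p - n - m)) - 2 * ((-(p - n - m) + p / (p - n)) + (p - n - m)) - (p - n - m) + 2) *
        (((p - n - m) - 0) * ((-(p - n - m) + p / (p - n)) + (p - n - m)) + 2 * ((-(p - n - m) + p / (p - n)) + (p - n - m)) - (p - n - m)) ≠ 0 := by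
      rw [hD]
      exact div_ne_zero (mul_ne_zero (mul_ne_zero (neg_ne_zero.mpr hd3)
        (neg_ne_zero.mpr (mul_ne_zero hd1 hn))) (neg_ne_zero.mpr hd2))
        (mul_ne_zero (mul_ne_zero hpn' hpn') hpn')
    rw [lamParam, div_eq_div_iff hDne hRHS]
    field_simp
    ring
end
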